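/- Let E be a finite connected directed graph, K a field, and z ∈ Z(KE) with Peirce decomposition z = Σ_{u ∈ E^0} z_u, where z_u = zu ∈ uAu. If u and v are connected vertices, then z_u ∈ Ku if and only if z_v ∈ Kv. Consequently, for any central element z either z_u ∈ Ku for all vertices u, or z_u ∉ Ku for all vertices u. -/

import Mathlib

/-! Basic infrastructure: directed graphs and their path algebras.

The path algebra `KE` is realized as the non-unital subalgebra generated by the
(images of the) vertices and edges inside the unital algebra `PA K E`, which is the
quotient of the free algebra on vertices and edges by the usual path-algebra
relations (vertices are orthogonal idempotents acting as local units on edges).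
Words of composable edges are exactly the paths, so `KE` has the paths as a basis. -/

/-- A directed graph `E = (E⁰, E¹, s, r)`. -/
structure DirGraph : Type 1 where
  V : Type
  Edge : Type
  s : Edge → V
  r : Edge → V

/-- A (non-unital, possibly non-closed) subset `S` of an algebra is *prime* if it is nonzero
and `a S b = 0` implies `a = 0` or `b = 0` for `a, b ∈ S`. -/
def IsPrimeSet {A : Type} [NonUnitalNonAssocSemiring A] (S : Set A) : Prop :=
  (∃ a ∈ S, a ≠ 0) ∧ ∀ a ∈ S, ∀ b ∈ S, (∀ x ∈ S, a * x * b = 0) → a = 0 ∨ b = 0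

/-- `J` is a two-sided ideal of the (possibly non-unital) subalgebra with carrier `S`. -/
def IsIdealOf (K : Type) [Field K] {A : Type} [Ring A] [Algebra K A] (S J : Set A) : Prop :=
  J ⊆ S ∧ (0 : A) ∈ J ∧ (∀ x ∈ J, ∀ y ∈ J, x + y ∈ J) ∧
    (∀ k : K, ∀ x ∈ J, k • x ∈ J) ∧ (∀ a ∈ S, ∀ x ∈ J, a * x ∈ J ∧ x * a ∈ J)

namespace DirGraph

/-- Generators of the path algebra: vertices and edges. -/
abbrev Gen (E : DirGraph) : Type := E.V ⊕ E.Edge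

variable (K : Type) [Field K] (E : DirGraph)

/-- The defining relations of the path algebra: vertices are orthogonal idempotents,
`s(e)·e = e`, `e·r(e) = e`, and all other vertex-edge products vanish. -/
inductive PathRel : FreeAlgebra K E.Gen → FreeAlgebra K E.Gen → Prop
  | vv_eq (u : E.V) :
      PathRel (FreeAlgebra.ι K (Sum.inl u) * FreeAlgebra.ι K (Sum.inl u))
        (FreeAlgebra.ι K (Sum.inl u))
  | vv_ne (u v : E.V) : u ≠ v →
      PathRel (FreeAlgebra.ι K (Sum.inl u) * FreeAlgebra.ι K (Sum.inl v)) 0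
  | ve_eq (e : E.Edge) :
      PathRel (FreeAlgebra.ι K (Sum.inl (E.s e)) * FreeAlgebra.ι K (Sum.inr e))
        (FreeAlgebra.ι K (Sum.inr e))
  | ve_ne (u : E.V) (e : E.Edge) : E.s e ≠ u →
      PathRel (FreeAlgebra.ι K (Sum.inl u) * FreeAlgebra.ι K (Sum.inr e)) 0
  | ev_eq (e : E.Edge) :
      PathRel (FreeAlgebra.ι K (Sum.inr e) * FreeAlgebra.ι K (Sum.inl (E.r e)))
        (FreeAlgebra.ι K (Sum.inr e))
  | ev_ne (e : E.Edge) (u : E.V) : E.r e ≠ u →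
      PathRel (FreeAlgebra.ι K (Sum.inr e) * FreeAlgebra.ι K (Sum.inl u)) 0

/-- The ambient unital algebra (the unitalization of the path algebra). -/
abbrev PA : Type := RingQuot (E.PathRel K)

/-- The image of a vertex in the path algebra. -/
noncomputable def vtx (u : E.V) : E.PA K :=
  RingQuot.mkAlgHom K (E.PathRel K) (FreeAlgebra.ι K (Sum.inl u))

/-- The image of an edge in the path algebra. -/
noncomputable def edg (e : E.Edge) : E.PA K :=
  RingQuot.mkAlgHom K (E.PathRel K) (FreeAlgebra.ι K (Sum.inr e))

/-- The path algebra `KE`: the (non-unital) subalgebra spanned by all paths, i.e.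
generated by the vertices and edges. -/
noncomputable def KE : NonUnitalSubalgebra K (E.PA K) :=
  NonUnitalAlgebra.adjoin K (Set.range (E.vtx K) ∪ Set.range (E.edg K))

/-- The center `Z(KE)` of the path algebra. -/
def relCenter : Set (E.PA K) :=
  {z | z ∈ E.KE K ∧ ∀ a ∈ E.KE K, a * z = z * a}

/-- `E.IsPathFrom u v l` : the list of edges `l` is a path from `u` to `v`
(`l = []` is the trivial path at `u = v`). -/
def IsPathFrom : E.V → E.V → List E.Edge → Prop
  | u, v, [] => u = v
  | u, v, e :: l => E.s e = u ∧ IsPathFrom (E.r e) v l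

/-- The element of the path algebra corresponding to the path starting at `u`
with list of edges `l` (for `l = []` this is the vertex `u` itself). -/
noncomputable def pathElem (u : E.V) (l : List E.Edge) : E.PA K :=
  E.vtx K u * (l.map (E.edg K)).prod

/-- The sum of all vertices: the unit of `KE` when `E⁰` is finite. -/
noncomputable def unitKE : E.PA K := ∑ᶠ u : E.V, E.vtx K u

/-- The scalar multiples `K·1` of the unit of `KE`. -/
noncomputable def scalarSet : Set (E.PA K) := Set.range fun k : K => k • E.unitKE K

/-- One step in the underlying undirected graph. -/
def Step (u v : E.V) : Prop :=
  (∃ e : E.Edge, E.s e = u ∧ E.r e = v) ∨ (∃ e : E.Edge, E.s e = v ∧ E.r e = u)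

/-- `u ∼ v` : the vertices `u` and `v` are connected in the underlying undirected graph. -/
def Connected (u v : E.V) : Prop := Relation.ReflTransGen E.Step u v

/-- The graph `E` is connected. -/
def IsConnectedGraph : Prop := ∀ u v : E.V, E.Connected u v

/-- The graph `E` is a cycle: `n ≥ 1` vertices `u₁, …, uₙ` and `n` edges `f₁, …, fₙ` with
`s(fᵢ) = uᵢ`, `r(fᵢ) = uᵢ₊₁` (indices mod `n`). -/
def IsCycleGraph : Prop :=
  ∃ n : ℕ, ∃ hn : 0 < n, ∃ (hv : Fin n ≃ E.V) (he : Fin n ≃ E.Edge),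
    ∀ i : Fin n, E.s (he i) = hv i ∧ E.r (he i) = hv ⟨(i.1 + 1) % n, Nat.mod_lt _ hn⟩

end DirGraph

/-! Let `e` be an edge from `a` to `b` and `z` central. If `z a = k a`, then `z e = z a e = k e`,
so `w = z b - k b` satisfies `e w = (z e - k e) b = 0` and `b w = w`. Left multiplication by `e`
is injective on `b · KE`, since on paths it is prepending `e`: in the left regular representation
of `KE` on the free module on paths, deleting a leading `e` undoes it, and this representation is
faithful on `KE` because a path is read off from its action on the trivial path at its target.
Hence `z b = k b`. The converse is the mirror argument with right multiplication, which is left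
multiplication in the path algebra of the reversed graph, the opposite algebra of `KE`. Walking
along an undirected path gives the equivalence for connected vertices. -/

namespace DirGraph

open scoped Classical Pointwise

variable {K : Type} [Field K] {E : DirGraph}

section Relations

lemma vtx_mul_vtx_self (u : E.V) : E.vtx K u * E.vtx K u = E.vtx K u := by
  simpa [vtx] using RingQuot.mkAlgHom_rel K (PathRel.vv_eq (K := K) (E := E) u)

lemma vtx_mul_vtx_of_ne {u v : E.V} (h : u ≠ v) : E.vtx K u * E.vtx K v = 0 := by
  simpa [vtx] using RingQuot.mkAlgHom_rel K (PathRel.vv_ne (K := K) (E := E) u v h)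

lemma vtx_mul_edg_self (e : E.Edge) : E.vtx K (E.s e) * E.edg K e = E.edg K e := by
  simpa [vtx, edg] using RingQuot.mkAlgHom_rel K (PathRel.ve_eq (K := K) (E := E) e)

lemma vtx_mul_edg_of_ne {u : E.V} {e : E.Edge} (h : E.s e ≠ u) :
    E.vtx K u * E.edg K e = 0 := by
  simpa [vtx, edg] using RingQuot.mkAlgHom_rel K (PathRel.ve_ne (K := K) (E := E) u e h)

lemma edg_mul_vtx_self (e : E.Edge) : E.edg K e * E.vtx K (E.r e) = E.edg K e := by
  simpa [vtx, edg] using RingQuot.mkAlgHom_rel K (PathRel.ev_eq (K := K) (E := E) e)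

lemma edg_mul_vtx_of_ne {u : E.V} {e : E.Edge} (h : E.r e ≠ u) :
    E.edg K e * E.vtx K u = 0 := by
  simpa [vtx, edg] using RingQuot.mkAlgHom_rel K (PathRel.ev_ne (K := K) (E := E) e u h)

lemma vtx_mem_KE (u : E.V) : E.vtx K u ∈ E.KE K :=
  NonUnitalAlgebra.subset_adjoin K (Or.inl ⟨u, rfl⟩)

lemma edg_mem_KE (e : E.Edge) : E.edg K e ∈ E.KE K :=
  NonUnitalAlgebra.subset_adjoin K (Or.inr ⟨e, rfl⟩)

end Relations

variable (E) in
structure PathRep (A : Type*) [Semiring A] where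
  vert : E.V → A
  edge : E.Edge → A
  vert_mul_self : ∀ u, vert u * vert u = vert u
  vert_mul_vert_of_ne : ∀ u v, u ≠ v → vert u * vert v = 0
  vert_mul_edge_self : ∀ e, vert (E.s e) * edge e = edge e
  vert_mul_edge_of_ne : ∀ u e, E.s e ≠ u → vert u * edge e = 0
  edge_mul_vert_self : ∀ e, edge e * vert (E.r e) = edge e
  edge_mul_vert_of_ne : ∀ e u, E.r e ≠ u → edge e * vert u = 0

namespace PathRep

variable {A : Type*} [Semiring A] [Algebra K A] (ρ : E.PathRep A)

variable (K) in
noncomputable def lift : E.PA K →ₐ[K] A :=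
  RingQuot.liftAlgHom K ⟨FreeAlgebra.lift K (Sum.elim ρ.vert ρ.edge), fun x y h => by
    cases h <;> simp [ρ.vert_mul_self, ρ.vert_mul_vert_of_ne, ρ.vert_mul_edge_self,
      ρ.vert_mul_edge_of_ne, ρ.edge_mul_vert_self, ρ.edge_mul_vert_of_ne, *]⟩

@[simp] lemma lift_vtx (u : E.V) : ρ.lift K (E.vtx K u) = ρ.vert u := by
  simp [lift, vtx]

@[simp] lemma lift_edg (e : E.Edge) : ρ.lift K (E.edg K e) = ρ.edge e := by
  simp [lift, edg]

end PathRep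

section Paths

lemma IsPathFrom.append {u v w : E.V} {l m : List E.Edge} (hl : E.IsPathFrom u v l)
    (hm : E.IsPathFrom v w m) : E.IsPathFrom u w (l ++ m) := by
  induction l generalizing u with
  | nil => exact (show u = v from hl) ▸ hm
  | cons e l ih => exact ⟨hl.1, ih hl.2⟩

lemma IsPathFrom.tail {u v : E.V} {e : E.Edge} {l : List E.Edge} (hl : E.IsPathFrom u v l)
    (he : l.head? = some e) : E.IsPathFrom (E.r e) v l.tail := by
  cases l with
  | nil => cases he
  | cons f l => exact (Option.some.inj he) ▸ hl.2

lemma pathElem_nil (u : E.V) : E.pathElem K u [] = E.vtx K u := by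
  simp [pathElem]

lemma pathElem_cons {u : E.V} {e : E.Edge} (h : E.s e = u) (l : List E.Edge) :
    E.pathElem K u (e :: l) = E.edg K e * E.pathElem K (E.r e) l := by
  subst h
  simp only [pathElem, List.map_cons, List.prod_cons, ← mul_assoc, vtx_mul_edg_self]
  rw [edg_mul_vtx_self]

lemma vtx_mul_pathElem (x u : E.V) (l : List E.Edge) :
    E.vtx K x * E.pathElem K u l = if x = u then E.pathElem K u l else 0 := by
  split_ifs with h
  · rw [pathElem, ← mul_assoc, h, vtx_mul_vtx_self]
  · rw [pathElem, ← mul_assoc, vtx_mul_vtx_of_ne h, zero_mul]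

lemma pathElem_mul_pathElem {u v : E.V} {l : List E.Edge} (hl : E.IsPathFrom u v l)
    (x : E.V) (m : List E.Edge) :
    E.pathElem K u l * E.pathElem K x m = if v = x then E.pathElem K u (l ++ m) else 0 := by
  induction l generalizing u with
  | nil =>
    obtain rfl : u = v := hl
    rw [pathElem_nil, vtx_mul_pathElem, List.nil_append]
    split_ifs with h <;> simp [h]
  | cons e l ih =>
    rw [pathElem_cons hl.1, mul_assoc, ih hl.2, List.cons_append, pathElem_cons hl.1, mul_ite,
      mul_zero]

variable (E) in
@[ext]
structure Path where
  src : E.V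
  tgt : E.V
  edges : List E.Edge
  isPathFrom : E.IsPathFrom src tgt edges

namespace Path

def nil (u : E.V) : E.Path := ⟨u, u, [], rfl⟩

def cons (e : E.Edge) (p : E.Path) (h : p.src = E.r e) : E.Path :=
  ⟨E.s e, p.tgt, e :: p.edges, ⟨rfl, h ▸ p.isPathFrom⟩⟩

def tail (p : E.Path) {e : E.Edge} (h : p.edges.head? = some e) : E.Path :=
  ⟨E.r e, p.tgt, p.edges.tail, p.isPathFrom.tail h⟩

variable (K) in
noncomputable def elem (p : E.Path) : E.PA K := E.pathElem K p.src p.edges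

end Path

lemma mem_span_path_elem_of_mem_KE {w : E.PA K} (hw : w ∈ E.KE K) :
    w ∈ Submodule.span K (Set.range (Path.elem K (E := E))) := by
  let paths := Set.range (Path.elem K (E := E))
  have hmul : paths * paths ⊆ insert 0 paths := by
    rintro _ ⟨_, ⟨p, rfl⟩, _, ⟨q, rfl⟩, rfl⟩
    change p.elem K * q.elem K ∈ _
    rw [Path.elem, Path.elem, pathElem_mul_pathElem p.isPathFrom]
    split_ifs with h
    · exact Or.inr ⟨⟨p.src, q.tgt, p.edges ++ q.edges, p.isPathFrom.append (h ▸ q.isPathFrom)⟩,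
        rfl⟩
    · exact Or.inl rfl
  let S := (Submodule.span K paths).toNonUnitalSubalgebra fun x y hx hy => by
    have := Submodule.mul_mem_mul hx hy
    rw [Submodule.span_mul_span] at this
    exact Submodule.span_le.mpr (hmul.trans (Set.insert_subset (zero_mem _)
      Submodule.subset_span)) this
  have hgen : Set.range (E.vtx K) ∪ Set.range (E.edg K) ⊆ S := by
    rintro _ (⟨u, rfl⟩ | ⟨e, rfl⟩)
    · exact Submodule.subset_span ⟨Path.nil u, pathElem_nil u⟩
    · refine Submodule.subset_span ⟨Path.cons e (Path.nil (E.r e)) rfl, ?_⟩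
      simp [Path.elem, Path.cons, Path.nil, pathElem_cons, pathElem_nil, edg_mul_vtx_self]
  exact NonUnitalAlgebra.adjoin_le (S := S) hgen hw

end Paths

section LeftRegular

variable (K) in
noncomputable def projSrc (u : E.V) : Module.End K (E.Path →₀ K) :=
  Finsupp.linearCombination K fun p => if p.src = u then Finsupp.single p 1 else 0

variable (K) in
noncomputable def consEdge (e : E.Edge) : Module.End K (E.Path →₀ K) :=
  Finsupp.linearCombination K fun p =>
    if h : p.src = E.r e then Finsupp.single (p.cons e h) 1 else 0

variable (K) in
noncomputable def tailEdge (e : E.Edge) : Module.End K (E.Path →₀ K) :=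
  Finsupp.linearCombination K fun p =>
    if h : p.edges.head? = some e then Finsupp.single (p.tail h) 1 else 0

lemma tailEdge_mul_consEdge (e : E.Edge) :
    tailEdge K e * consEdge K e = projSrc K (E.r e) := by
  refine Finsupp.lhom_ext fun p k => ?_
  by_cases h : p.src = E.r e
  · simp only [tailEdge, consEdge, Path.cons, Module.End.mul_apply,
      Finsupp.linearCombination_single, h, ↓reduceDIte, Finsupp.smul_single, smul_eq_mul, mul_one,
      List.head?_cons, projSrc, ↓reduceIte]
    congr 1
    ext <;> simp [Path.tail, h]
  · simp [tailEdge, consEdge, projSrc, h]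

variable (K E) in
noncomputable def leftRegularRep : E.PathRep (Module.End K (E.Path →₀ K)) where
  vert := projSrc K
  edge := consEdge K
  vert_mul_self u := Finsupp.lhom_ext fun p k => by
    by_cases h : p.src = u <;> simp [projSrc, h]
  vert_mul_vert_of_ne u v huv := Finsupp.lhom_ext fun p k => by
    by_cases h : p.src = v <;> simp [projSrc, h, huv.symm]
  vert_mul_edge_self e := Finsupp.lhom_ext fun p k => by
    by_cases h : p.src = E.r e <;> simp [projSrc, consEdge, h, Path.cons]
  vert_mul_edge_of_ne u e he := Finsupp.lhom_ext fun p k => by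
    by_cases h : p.src = E.r e <;> simp [projSrc, consEdge, h, Path.cons, he]
  edge_mul_vert_self e := Finsupp.lhom_ext fun p k => by
    by_cases h : p.src = E.r e <;> simp [projSrc, consEdge, h]
  edge_mul_vert_of_ne e u he := Finsupp.lhom_ext fun p k => by
    by_cases h : p.src = u <;> simp [projSrc, consEdge, h, he.symm]

variable (K E) in
noncomputable def leftRegular : E.PA K →ₐ[K] Module.End K (E.Path →₀ K) :=
  (leftRegularRep K E).lift K

lemma leftRegular_pathElem_single_nil {u v : E.V} {l : List E.Edge} (hl : E.IsPathFrom u v l)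
    (x : E.V) :
    leftRegular K E (E.pathElem K u l) (Finsupp.single (Path.nil x) 1) =
      if v = x then Finsupp.single ⟨u, v, l, hl⟩ 1 else 0 := by
  induction l generalizing u with
  | nil =>
    obtain rfl : u = v := hl
    by_cases h : u = x
    · subst h; simp [pathElem_nil, leftRegular, leftRegularRep, projSrc, Path.nil]
    · simp [pathElem_nil, leftRegular, leftRegularRep, projSrc, Path.nil, h, Ne.symm h]
  | cons e l ih =>
    rw [pathElem_cons hl.1, map_mul, Module.End.mul_apply, ih hl.2]
    split_ifs with h
    · simp [leftRegular, leftRegularRep, consEdge, Path.cons, hl.1]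
    · simp

lemma leftRegular_linearCombination_apply (c : E.Path →₀ K) (p : E.Path) :
    leftRegular K E (Finsupp.linearCombination K (Path.elem K) c)
      (Finsupp.single (Path.nil p.tgt) 1) p = c p := by
  induction c using Finsupp.induction_linear with
  | zero => simp
  | add c d hc hd => simp [hc, hd]
  | single q a =>
    rw [Finsupp.linearCombination_single, map_smul, LinearMap.smul_apply, Path.elem,
      leftRegular_pathElem_single_nil q.isPathFrom]
    by_cases h : q = p
    · subst h; simp
    · split_ifs <;> simp [h]

lemma eq_zero_of_leftRegular_eq_zero {w : E.PA K}
    (hw : w ∈ Submodule.span K (Set.range (Path.elem K (E := E)))) (h : leftRegular K E w = 0) :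
    w = 0 := by
  obtain ⟨c, rfl⟩ := Finsupp.mem_span_range_iff_exists_finsupp.mp hw
  rw [← Finsupp.linearCombination_apply]
  suffices c = 0 by simp [this]
  ext p
  rw [← leftRegular_linearCombination_apply, Finsupp.linearCombination_apply, h]
  rfl

lemma vtx_mul_eq_zero_of_edg_mul_eq_zero {w : E.PA K} (hw : w ∈ E.KE K) {e : E.Edge}
    (h : E.edg K e * w = 0) : E.vtx K (E.r e) * w = 0 := by
  refine eq_zero_of_leftRegular_eq_zero
    (mem_span_path_elem_of_mem_KE (mul_mem (vtx_mem_KE _) hw)) ?_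
  have hvtx : leftRegular K E (E.vtx K (E.r e)) = tailEdge K e * leftRegular K E (E.edg K e) := by
    simp [leftRegular, leftRegularRep, tailEdge_mul_consEdge]
  rw [map_mul, hvtx, mul_assoc, ← map_mul, h, map_zero, mul_zero]

end LeftRegular

section Reverse

variable (E) in
def reverse : DirGraph := ⟨E.V, E.Edge, E.r, E.s⟩

variable (K E) in
noncomputable def opReverse : E.PA K →ₐ[K] (E.reverse.PA K)ᵐᵒᵖ :=
  PathRep.lift K
    { vert := fun u => MulOpposite.op (E.reverse.vtx K u)
      edge := fun e => MulOpposite.op (E.reverse.edg K e)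
      vert_mul_self := fun u => congrArg MulOpposite.op (vtx_mul_vtx_self (E := E.reverse) u)
      vert_mul_vert_of_ne := fun _ _ h => congrArg MulOpposite.op
        (vtx_mul_vtx_of_ne (E := E.reverse) (Ne.symm h))
      vert_mul_edge_self := fun e => congrArg MulOpposite.op (edg_mul_vtx_self (E := E.reverse) e)
      vert_mul_edge_of_ne := fun _ _ h => congrArg MulOpposite.op
        (edg_mul_vtx_of_ne (E := E.reverse) h)
      edge_mul_vert_self := fun e => congrArg MulOpposite.op (vtx_mul_edg_self (E := E.reverse) e)
      edge_mul_vert_of_ne := fun _ _ h => congrArg MulOpposite.op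
        (vtx_mul_edg_of_ne (E := E.reverse) h) }

@[simp] lemma opReverse_vtx (u : E.V) :
    opReverse K E (E.vtx K u) = MulOpposite.op (E.reverse.vtx K u) :=
  PathRep.lift_vtx _ u

@[simp] lemma opReverse_edg (e : E.Edge) :
    opReverse K E (E.edg K e) = MulOpposite.op (E.reverse.edg K e) :=
  PathRep.lift_edg _ e

/-- Typechecks because `E.reverse.reverse` is definitionally `E` (structure eta). -/
lemma unop_opReverse_unop_opReverse (w : E.PA K) :
    (opReverse K E.reverse (opReverse K E w).unop).unop = w := by
  let φ : E.PA K →ₐ[K] E.PA K := ((AlgEquiv.opOp K (E.PA K)).symm.toAlgHom.comp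
    (AlgHom.op (opReverse K E.reverse))).comp (opReverse K E)
  suffices φ = AlgHom.id K _ from AlgHom.congr_fun this w
  refine RingQuot.ringQuot_ext' K _ _ (FreeAlgebra.hom_ext (funext ?_))
  rintro (u | e)
  · change (opReverse K E.reverse (opReverse K E (E.vtx K u)).unop).unop = E.vtx K u
    rw [opReverse_vtx, MulOpposite.unop_op]
    exact congrArg MulOpposite.unop (opReverse_vtx (E := E.reverse) u)
  · change (opReverse K E.reverse (opReverse K E (E.edg K e)).unop).unop = E.edg K e
    rw [opReverse_edg, MulOpposite.unop_op]
    exact congrArg MulOpposite.unop (opReverse_edg (E := E.reverse) e)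

lemma opReverse_injective : Function.Injective (opReverse K E) := fun v w h => by
  rw [← unop_opReverse_unop_opReverse v, ← unop_opReverse_unop_opReverse w, h]

lemma unop_opReverse_mem_KE {w : E.PA K} (hw : w ∈ E.KE K) :
    (opReverse K E w).unop ∈ E.reverse.KE K := by
  induction hw using NonUnitalAlgebra.adjoin_induction with
  | mem x hx =>
    rcases hx with ⟨u, rfl⟩ | ⟨e, rfl⟩
    · simpa using vtx_mem_KE (E := E.reverse) u
    · simpa using edg_mem_KE (E := E.reverse) e
  | add x y _ _ hx hy => simpa using add_mem hx hy
  | zero => simp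
  | mul x y _ _ hx hy => simpa using mul_mem hy hx
  | smul k x _ hx => simpa using SMulMemClass.smul_mem k hx

lemma mul_vtx_eq_zero_of_mul_edg_eq_zero {w : E.PA K} (hw : w ∈ E.KE K) {e : E.Edge}
    (h : w * E.edg K e = 0) : w * E.vtx K (E.s e) = 0 := by
  have h' : E.reverse.edg K e * (opReverse K E w).unop = 0 := by
    simpa using congrArg MulOpposite.unop (congrArg (opReverse K E) h)
  have := vtx_mul_eq_zero_of_edg_mul_eq_zero (unop_opReverse_mem_KE hw) h'
  apply opReverse_injective
  rw [map_mul, map_zero, opReverse_vtx]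
  exact (by simpa using congrArg MulOpposite.op this :
    opReverse K E w * MulOpposite.op (E.reverse.vtx K (E.reverse.r e)) = 0)

end Reverse

section Center

/-- The Peirce component `z_u = z u` lies in `K u`. -/
def IsScalarAt (z : E.PA K) (u : E.V) : Prop := ∃ k : K, z * E.vtx K u = k • E.vtx K u

variable {z : E.PA K}

lemma IsScalarAt.rng (hz : z ∈ E.relCenter K) {e : E.Edge} (h : IsScalarAt z (E.s e)) :
    IsScalarAt z (E.r e) := by
  obtain ⟨k, hk⟩ := h
  have hze : z * E.edg K e = k • E.edg K e := by
    rw [← vtx_mul_edg_self, ← mul_assoc, hk, smul_mul_assoc]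
  let w := z * E.vtx K (E.r e) - k • E.vtx K (E.r e)
  have hw : w ∈ E.KE K :=
    sub_mem (mul_mem hz.1 (vtx_mem_KE _)) (SMulMemClass.smul_mem _ (vtx_mem_KE _))
  have hew : E.edg K e * w = 0 := by
    rw [mul_sub, ← mul_assoc, hz.2 _ (edg_mem_KE e), mul_assoc, mul_smul_comm, edg_mul_vtx_self,
      hze, sub_self]
  have hvw : E.vtx K (E.r e) * w = w := by
    rw [mul_sub, ← mul_assoc, hz.2 _ (vtx_mem_KE _), mul_assoc, mul_smul_comm, vtx_mul_vtx_self]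
  refine ⟨k, sub_eq_zero.mp ?_⟩
  change w = 0
  rw [← hvw]
  exact vtx_mul_eq_zero_of_edg_mul_eq_zero hw hew

lemma IsScalarAt.src (hz : z ∈ E.relCenter K) {e : E.Edge} (h : IsScalarAt z (E.r e)) :
    IsScalarAt z (E.s e) := by
  obtain ⟨k, hk⟩ := h
  have hze : z * E.edg K e = k • E.edg K e := by
    rw [← hz.2 _ (edg_mem_KE e), ← edg_mul_vtx_self, mul_assoc, hz.2 _ (vtx_mem_KE _), hk,
      mul_smul_comm]
  let w := z * E.vtx K (E.s e) - k • E.vtx K (E.s e)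
  have hw : w ∈ E.KE K :=
    sub_mem (mul_mem hz.1 (vtx_mem_KE _)) (SMulMemClass.smul_mem _ (vtx_mem_KE _))
  have hwe : w * E.edg K e = 0 := by
    rw [sub_mul, mul_assoc, smul_mul_assoc, vtx_mul_edg_self, hze, sub_self]
  have hwv : w * E.vtx K (E.s e) = w := by
    rw [sub_mul, mul_assoc, smul_mul_assoc, vtx_mul_vtx_self]
  refine ⟨k, sub_eq_zero.mp ?_⟩
  change w = 0
  rw [← hwv]
  exact mul_vtx_eq_zero_of_mul_edg_eq_zero hw hwe

lemma isScalarAt_iff_of_connected (hz : z ∈ E.relCenter K) {u v : E.V} (h : E.Connected u v) :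
    IsScalarAt z u ↔ IsScalarAt z v := by
  induction h with
  | refl => rfl
  | tail _ hstep ih =>
    refine ih.trans ?_
    rcases hstep with ⟨e, rfl, rfl⟩ | ⟨e, rfl, rfl⟩
    · exact ⟨IsScalarAt.rng hz, IsScalarAt.src hz⟩
    · exact ⟨IsScalarAt.src hz, IsScalarAt.rng hz⟩

end Center

end DirGraph

theorem stmt3_general (K : Type) [Field K] (E : DirGraph)
    (hconn : E.IsConnectedGraph) (z : E.PA K) (hz : z ∈ E.relCenter K) :
    (∀ u v : E.V, E.Connected u v →
      ((∃ k : K, z * E.vtx K u = k • E.vtx K u) ↔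
        (∃ k : K, z * E.vtx K v = k • E.vtx K v))) ∧
    ((∀ u : E.V, ∃ k : K, z * E.vtx K u = k • E.vtx K u) ∨
      (∀ u : E.V, ¬ ∃ k : K, z * E.vtx K u = k • E.vtx K u)) := by
  have hiff : ∀ u v : E.V, E.Connected u v → (DirGraph.IsScalarAt z u ↔ DirGraph.IsScalarAt z v) :=
    fun _ _ => DirGraph.isScalarAt_iff_of_connected hz
  refine ⟨hiff, ?_⟩
  by_cases hall : ∀ u, DirGraph.IsScalarAt z u
  · exact Or.inl hall
  · obtain ⟨u₀, hu₀⟩ := not_forall.mp hall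
    exact Or.inr fun u hu => hu₀ ((hiff u u₀ (hconn u u₀)).mp hu)

/-- For `E` finite connected and `z ∈ Z(KE)` with Peirce components
`z_u = z·u`: if `u ∼ v` then `z_u ∈ Ku ↔ z_v ∈ Kv`; consequently either `z_u ∈ Ku`
for all vertices `u`, or `z_u ∉ Ku` for all vertices `u`. -/
theorem stmt3 (K : Type) [Field K] (E : DirGraph) [Finite E.V]
    (hconn : E.IsConnectedGraph) (z : E.PA K) (hz : z ∈ E.relCenter K) :
    (∀ u v : E.V, E.Connected u v →
      ((∃ k : K, z * E.vtx K u = k • E.vtx K u) ↔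
        (∃ k : K, z * E.vtx K v = k • E.vtx K v))) ∧
    ((∀ u : E.V, ∃ k : K, z * E.vtx K u = k • E.vtx K u) ∨
      (∀ u : E.V, ¬ ∃ k : K, z * E.vtx K u = k • E.vtx K u)) :=
  stmt3_general K E hconn z hz
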